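/- arXiv:2109.06994 — 3 statements merged into one kernel-verified Lean document; each statement's English description precedes it below -/
import Mathlib

section
/- Let g : ℝ → ℝ be a C¹ function and suppose there exists an integer i ≥ 1 such that i² < g'(x) < (i+1)² for all x ∈ ℝ. Let s be a positive integer and let f : ℝ → ℝ be a continuous function that is (2π/s)-periodic. Then every C² function u : ℝ → ℝ that is 2π-periodic and satisfies -u''(t) + g(u(t)) = f(t) for all t ∈ ℝ is (2π/s)-periodic, i.e. u(t + 2π/s) = u(t) for all t ∈ ℝ. -/
/-!
Since `g' > i² ≥ 0`, `g` is strictly increasing. For `T = 2π/s` the difference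
`w t = u (t + T) - u t` is `2π`-periodic and, because `f` is `T`-periodic,
`w'' t = g (u (t + T)) - g (u t)`, which has the sign of `w t`. At a global maximum of `w`
the second derivative cannot be positive, so `w ≤ 0`; symmetrically `w ≥ 0`.
-/

open Real Function

/-- If `deriv (deriv f) x₀` were positive, the second-derivative test would make `x₀` a local
minimum as well, so `f` would be locally constant near `x₀`. -/
theorem IsLocalMax.deriv_deriv_nonpos {f : ℝ → ℝ} {x₀ : ℝ} (h : IsLocalMax f x₀)
    (hc : ContinuousAt f x₀) : deriv (deriv f) x₀ ≤ 0 := by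
  by_contra! hpos
  have hmin : IsLocalMin f x₀ := isLocalMin_of_deriv_deriv_pos hpos h.deriv_eq_zero hc
  have hconst : f =ᶠ[nhds x₀] fun _ => f x₀ := by
    filter_upwards [h, hmin] with x hle hge using le_antisymm hle hge
  have hzero : deriv (deriv f) x₀ = 0 := by
    simpa only [deriv_const', deriv_const] using hconst.deriv.deriv_eq
  exact hpos.ne' hzero

theorem Function.Periodic.exists_forall_le_of_continuous {α : Type*} [TopologicalSpace α]
    [LinearOrder α] [ClosedIciTopology α] {f : ℝ → α} {c : ℝ} (hp : Periodic f c) (hc : c ≠ 0)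
    (hf : Continuous f) : ∃ x₀, ∀ x, f x ≤ f x₀ := by
  obtain ⟨_, ⟨x₀, rfl⟩, hmax⟩ :=
    (hp.compact_of_continuous hc hf).exists_isGreatest (Set.range_nonempty f)
  exact ⟨x₀, fun x => hmax ⟨x, rfl⟩⟩

theorem Function.Periodic.nonpos_of_deriv_deriv_pos {w : ℝ → ℝ} {c : ℝ} (hp : Periodic w c)
    (hc : c ≠ 0) (hw : Continuous w) (hpos : ∀ t, 0 < w t → 0 < deriv (deriv w) t) (t : ℝ) :
    w t ≤ 0 := by
  obtain ⟨t₀, hmax⟩ := hp.exists_forall_le_of_continuous hc hw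
  by_contra! ht
  have hlocal : IsLocalMax w t₀ := Filter.Eventually.of_forall hmax
  exact (hpos t₀ (ht.trans_le (hmax t))).not_ge (hlocal.deriv_deriv_nonpos hw.continuousAt)

theorem Function.Periodic.eq_zero_of_sign_deriv_deriv {w : ℝ → ℝ} {c : ℝ} (hp : Periodic w c)
    (hc : c ≠ 0) (hw : Continuous w) (hpos : ∀ t, 0 < w t → 0 < deriv (deriv w) t)
    (hneg : ∀ t, w t < 0 → deriv (deriv w) t < 0) (t : ℝ) : w t = 0 := by
  have hp' : Periodic (fun t => -w t) c := fun t => by simp only [hp t]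
  have hnonneg : -w t ≤ 0 := by
    refine hp'.nonpos_of_deriv_deriv_pos hc hw.neg (fun t ht => ?_) t
    simpa only [deriv.fun_neg', neg_pos] using hneg t (neg_pos.mp ht)
  exact le_antisymm (hp.nonpos_of_deriv_deriv_pos hc hw hpos t) (neg_nonpos.mp hnonneg)

theorem deriv_sub_comp_add_const {u : ℝ → ℝ} (hu : Differentiable ℝ u) (T : ℝ) :
    deriv (fun t => u (t + T) - u t) = fun t => deriv u (t + T) - deriv u t := by
  funext t
  rw [deriv_fun_sub (differentiableAt_comp_add_const.mpr (hu _)) (hu t), deriv_comp_add_const]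

theorem deriv_deriv_sub_comp_add_const {u : ℝ → ℝ} (hu : ContDiff ℝ 2 u) (T : ℝ) :
    deriv (deriv fun t => u (t + T) - u t) =
      fun t => deriv (deriv u) (t + T) - deriv (deriv u) t := by
  have hu' : ContDiff ℝ 1 (deriv u) := (contDiff_succ_iff_deriv (n := 1)).mp hu |>.2.2
  rw [deriv_sub_comp_add_const (hu.differentiable (by norm_num)),
    deriv_sub_comp_add_const (hu'.differentiable one_ne_zero)]

theorem preservation_of_symmetry_general
    (g : ℝ → ℝ)
    (i : ℕ)
    (hlow : ∀ x : ℝ, (i : ℝ) ^ 2 < deriv g x)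
    (s : ℕ)
    (f : ℝ → ℝ)
    (hfper : Function.Periodic f (2 * π / s))
    (u : ℝ → ℝ) (hu : ContDiff ℝ 2 u)
    (huper : Function.Periodic u (2 * π))
    (hueq : ∀ t : ℝ, -(deriv (deriv u) t) + g (u t) = f t) :
    Function.Periodic u (2 * π / s) := by
  set T := 2 * π / s
  have hg : StrictMono g := strictMono_of_deriv_pos fun x => (sq_nonneg _).trans_lt (hlow x)
  have hw'' (t : ℝ) : deriv (deriv fun t => u (t + T) - u t) t = g (u (t + T)) - g (u t) := by
    rw [deriv_deriv_sub_comp_add_const hu]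
    linarith [hueq t, hueq (t + T), hfper t]
  have hwper : Periodic (fun t => u (t + T) - u t) (2 * π) := fun t => by
    simp only [add_right_comm t (2 * π) T, huper _]
  have hw : Continuous fun t => u (t + T) - u t :=
    (hu.continuous.comp (continuous_add_const T)).sub hu.continuous
  intro t
  refine sub_eq_zero.mp (hwper.eq_zero_of_sign_deriv_deriv two_pi_pos.ne' hw (fun t ht => ?_)
    (fun t ht => ?_) t)
  · exact hw'' t ▸ sub_pos.mpr (hg (sub_pos.mp ht))
  · exact hw'' t ▸ sub_neg.mpr (hg (sub_neg.mp ht))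

/-- Preservation of symmetry: if `g'` is squeezed strictly between consecutive
eigenvalues `i²` and `(i+1)²` of the periodic problem, and `f` is continuous and
`2π/s`-periodic, then every `C²` `2π`-periodic solution `u` of `-u'' + g(u) = f`
is `2π/s`-periodic. -/
theorem preservation_of_symmetry
    (g : ℝ → ℝ) (hg : ContDiff ℝ 1 g)
    (i : ℕ) (hi : 1 ≤ i)
    (hlow : ∀ x : ℝ, (i : ℝ) ^ 2 < deriv g x)
    (hhigh : ∀ x : ℝ, deriv g x < ((i : ℝ) + 1) ^ 2)
    (s : ℕ) (hs : 0 < s)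
    (f : ℝ → ℝ) (hf : Continuous f)
    (hfper : Function.Periodic f (2 * π / s))
    (u : ℝ → ℝ) (hu : ContDiff ℝ 2 u)
    (huper : Function.Periodic u (2 * π))
    (hueq : ∀ t : ℝ, -(deriv (deriv u) t) + g (u t) = f t) :
    Function.Periodic u (2 * π / s) :=
  preservation_of_symmetry_general g i hlow s f hfper u hu huper hueq
end

section
/- Let g : ℝ → ℝ be a C¹ function and suppose there exists an integer i ≥ 1 such that i² < g'(x) < (i+1)² for all x ∈ ℝ. Let s be a positive integer and let f : ℝ → ℝ be a continuous function that is (2π/s)-periodic. Then there exists exactly one C² 2π-periodic function u : ℝ → ℝ satisfying -u''(t) + g(u(t)) = f(t) for all t ∈ ℝ, and this unique solution is (2π/s)-periodic. -/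
/-!
Put `ω = i + 1` and write the equation as `-u'' + ω² u = f + φ(u)` with `φ(x) = ω² x - g(x)`.
Since `0 ≤ φ' ≤ ω² - i² < ω²` and the Green operator `h ↦ (2ω)⁻¹ ∫ e^{-ω|t-s|} h(s) ds` of
`-d²/dt² + ω²` has norm at most `ω⁻²` on bounded continuous functions on `ℝ`, the map
`u ↦ G(f + φ(u))` is a contraction there. Because a bounded solution of `z'' = ω² z` with bounded
`z'` vanishes, its fixed point is the only solution on `ℝ` that is bounded together with its
derivative. Every `2π`-periodic solution is such a solution, and so is every translate of one by a
period `2π/s` of `f`; hence the periodic solution is unique and `2π/s`-periodic.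
-/

open Real Set MeasureTheory Bornology Function
open scoped BoundedContinuousFunction NNReal

lemma hasDerivAt_exp_mul (a t : ℝ) : HasDerivAt (fun t => exp (a * t)) (a * exp (a * t)) t := by
  simpa [mul_comm] using ((hasDerivAt_id t).const_mul a).exp

lemma exp_neg_mul_mul_exp_mul (ω t : ℝ) : exp (-ω * t) * exp (ω * t) = 1 := by
  rw [← exp_add]; simp

lemma hasDerivAt_integral_Iic {F : ℝ → ℝ} (hF : Continuous F)
    (hint : ∀ t, IntegrableOn F (Iic t)) (t : ℝ) :
    HasDerivAt (fun t => ∫ s in Iic t, F s) (F t) t := by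
  have hsplit : (fun b => ∫ s in Iic b, F s) = fun b => (∫ s in Iic 0, F s) + ∫ s in 0..b, F s := by
    funext b
    rw [← intervalIntegral.integral_Iic_sub_Iic (hint 0) (hint b)]
    ring
  rw [hsplit]
  exact (hF.integral_hasStrictDerivAt 0 t).hasDerivAt.const_add _

lemma hasDerivAt_integral_Ioi {F : ℝ → ℝ} (hF : Continuous F)
    (hint : ∀ t, IntegrableOn F (Ioi t)) (t : ℝ) :
    HasDerivAt (fun t => ∫ s in Ioi t, F s) (-F t) t := by
  have hsplit : (fun b => ∫ s in Ioi b, F s) = fun b => (∫ s in Ioi 0, F s) - ∫ s in 0..b, F s := by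
    funext b
    rw [← intervalIntegral.integral_Ioi_sub_Ioi' (hint 0) (hint b)]
    ring
  rw [hsplit]
  exact (hF.integral_hasStrictDerivAt 0 t).hasDerivAt.const_sub _

theorem Function.Periodic.deriv {u : ℝ → ℝ} {c : ℝ} (hu : Periodic u c) : Periodic (deriv u) c :=
  fun t => by rw [← deriv_comp_add_const, show (fun x => u (x + c)) = u from funext hu]

lemma contDiff_two_of_hasDerivAt {u u' u'' : ℝ → ℝ} (hu : ∀ t, HasDerivAt u (u' t) t)
    (hu' : ∀ t, HasDerivAt u' (u'' t) t) (hu'' : Continuous u'') : ContDiff ℝ 2 u := by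
  have hderiv : deriv u = u' := funext fun t => (hu t).deriv
  rw [show (2 : WithTop ℕ∞) = 1 + 1 from rfl, contDiff_succ_iff_deriv, hderiv,
    contDiff_one_iff_deriv, show deriv u' = u'' from funext fun t => (hu' t).deriv]
  exact ⟨fun t => (hu t).differentiableAt, by simp, fun t => (hu' t).differentiableAt, hu''⟩

lemma lipschitzWith_mul_sub_of_deriv_mem_Icc {g : ℝ → ℝ} {a b : ℝ} (hg : Differentiable ℝ g)
    (hab : ∀ x, deriv g x ∈ Icc a b) : LipschitzWith (b - a).toNNReal (fun x => b * x - g x) := by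
  refine lipschitzWith_of_nnnorm_deriv_le (by fun_prop) fun x => ?_
  have hd : HasDerivAt (fun x => b * x - g x) (b - deriv g x) x := by
    simpa using ((hasDerivAt_id x).const_mul b).fun_sub (hg x).hasDerivAt
  rw [← NNReal.coe_le_coe, coe_nnnorm, Real.norm_eq_abs, Real.coe_toNNReal', hd.deriv, abs_le]
  constructor <;> linarith [(hab x).1, (hab x).2, le_max_left (b - a) 0]

lemma eq_zero_of_hasDerivAt_mul_of_abs_le {q : ℝ → ℝ} {a C : ℝ} (ha : a ≠ 0)
    (hq : ∀ t, HasDerivAt q (a * q t) t) (hC : ∀ t, |q t| ≤ C) (t : ℝ) : q t = 0 := by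
  have hexp : ∀ t, q t = q 0 * exp (a * t) := by
    have hconst : ∀ t, HasDerivAt (fun t => q t * exp (-a * t)) 0 t := fun t =>
      ((hq t).mul (hasDerivAt_exp_mul (-a) t)).congr_deriv (by ring)
    intro t
    have := is_const_of_deriv_eq_zero (fun t => (hconst t).differentiableAt)
      (fun t => (hconst t).deriv) t 0
    simp only [mul_zero, exp_zero, mul_one] at this
    rw [← this, mul_assoc, ← exp_add]
    simp
  suffices hq0 : q 0 = 0 by rw [hexp, hq0, zero_mul]
  by_contra hq0
  have hpos : 0 < (|C| + 1) / |q 0| := by positivity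
  -- at `t = log ((|C| + 1) / |q 0|) / a` the exponential solution has size `|C| + 1`
  have hbig := hC (log ((|C| + 1) / |q 0|) / a)
  rw [hexp, mul_div_cancel₀ _ ha, exp_log hpos, abs_mul, abs_of_pos hpos,
    mul_div_cancel₀ _ (abs_ne_zero.2 hq0)] at hbig
  linarith [le_abs_self C]

lemma eq_zero_of_hasDerivAt_of_hasDerivAt_sq_mul {z z' : ℝ → ℝ} {ω C C' : ℝ} (hω : 0 < ω)
    (hz : ∀ t, HasDerivAt z (z' t) t) (hz' : ∀ t, HasDerivAt z' (ω ^ 2 * z t) t)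
    (hC : ∀ t, |z t| ≤ C) (hC' : ∀ t, |z' t| ≤ C') (t : ℝ) : z t = 0 := by
  -- factor `d²/dt² - ω²` as `(d/dt + ω)(d/dt - ω)`
  have hp : ∀ t, z' t + ω * z t = 0 := by
    refine eq_zero_of_hasDerivAt_mul_of_abs_le (C := C' + ω * C) hω.ne' (fun t => ?_) fun t => ?_
    · exact ((hz' t).add ((hz t).const_mul ω)).congr_deriv (by ring)
    · calc |z' t + ω * z t| ≤ |z' t| + |ω * z t| := abs_add_le _ _
        _ = |z' t| + ω * |z t| := by rw [abs_mul, abs_of_pos hω]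
        _ ≤ C' + ω * C := by gcongr; exacts [hC' t, hC t]
  refine eq_zero_of_hasDerivAt_mul_of_abs_le (neg_ne_zero.2 hω.ne') (fun t => ?_) hC t
  exact (hz t).congr_deriv (by linarith [hp t])

namespace SymmetryPreservation

noncomputable section

lemma integrableOn_bcf_mul (h : ℝ →ᵇ ℝ) {e : ℝ → ℝ} {S : Set ℝ} (he : IntegrableOn e S) :
    IntegrableOn (fun s => h s * e s) S :=
  he.bdd_mul h.continuous.aestronglyMeasurable (ae_of_all _ h.norm_coe_le_norm)

lemma abs_setIntegral_bcf_mul_le (h : ℝ →ᵇ ℝ) {e : ℝ → ℝ} {S : Set ℝ} (he : IntegrableOn e S)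
    (he0 : ∀ s, 0 ≤ e s) : |∫ s in S, h s * e s| ≤ ‖h‖ * ∫ s in S, e s := by
  rw [← Real.norm_eq_abs, ← integral_const_mul]
  refine norm_integral_le_of_norm_le (he.const_mul _) (ae_of_all _ fun s => ?_)
  rw [norm_mul, Real.norm_of_nonneg (he0 s)]
  exact mul_le_mul_of_nonneg_right (h.norm_coe_le_norm s) (he0 s)

lemma setIntegral_bcf_sub_mul (h₁ h₂ : ℝ →ᵇ ℝ) {e : ℝ → ℝ} {S : Set ℝ} (he : IntegrableOn e S) :
    ∫ s in S, (h₁ - h₂) s * e s = (∫ s in S, h₁ s * e s) - ∫ s in S, h₂ s * e s := by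
  simp only [BoundedContinuousFunction.coe_sub, Pi.sub_apply, sub_mul]
  exact integral_sub (integrableOn_bcf_mul h₁ he) (integrableOn_bcf_mul h₂ he)

variable {ω : ℝ}

/- The parts `s < t` and `s > t` of `green`, with `e^{∓ωt}` pulled out of the integral so that the
fundamental theorem of calculus applies. -/
def greenLeft (ω : ℝ) (h : ℝ →ᵇ ℝ) (t : ℝ) : ℝ :=
  exp (-ω * t) * ∫ s in Iic t, h s * exp (ω * s)

def greenRight (ω : ℝ) (h : ℝ →ᵇ ℝ) (t : ℝ) : ℝ :=
  exp (ω * t) * ∫ s in Ioi t, h s * exp (-ω * s)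

/-- `green ω h t = (2ω)⁻¹ ∫ e^{-ω|t-s|} h(s) ds`, the bounded solution of `-u'' + ω² u = h`. -/
def green (ω : ℝ) (h : ℝ →ᵇ ℝ) (t : ℝ) : ℝ :=
  (greenLeft ω h t + greenRight ω h t) / (2 * ω)

def greenDeriv (ω : ℝ) (h : ℝ →ᵇ ℝ) (t : ℝ) : ℝ :=
  (greenRight ω h t - greenLeft ω h t) / 2

lemma hasDerivAt_greenLeft (hω : 0 < ω) (h : ℝ →ᵇ ℝ) (t : ℝ) :
    HasDerivAt (greenLeft ω h) (-ω * greenLeft ω h t + h t) t := by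
  have hI := hasDerivAt_integral_Iic (F := fun s => h s * exp (ω * s)) (by fun_prop)
    (fun t => integrableOn_bcf_mul h (integrableOn_exp_mul_Iic hω t)) t
  refine ((hasDerivAt_exp_mul (-ω) t).mul hI).congr_deriv ?_
  rw [greenLeft]
  linear_combination h t * exp_neg_mul_mul_exp_mul ω t

lemma hasDerivAt_greenRight (hω : 0 < ω) (h : ℝ →ᵇ ℝ) (t : ℝ) :
    HasDerivAt (greenRight ω h) (ω * greenRight ω h t - h t) t := by
  have hI := hasDerivAt_integral_Ioi (F := fun s => h s * exp (-ω * s)) (by fun_prop)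
    (fun t => integrableOn_bcf_mul h (integrableOn_exp_mul_Ioi (neg_lt_zero.2 hω) t)) t
  refine ((hasDerivAt_exp_mul ω t).mul hI).congr_deriv ?_
  rw [greenRight]
  linear_combination -h t * exp_neg_mul_mul_exp_mul ω t

lemma abs_greenLeft_le (hω : 0 < ω) (h : ℝ →ᵇ ℝ) (t : ℝ) : |greenLeft ω h t| ≤ ‖h‖ / ω := by
  have hI := abs_setIntegral_bcf_mul_le h (integrableOn_exp_mul_Iic hω t) fun s => (exp_pos _).le
  rw [integral_exp_mul_Iic hω] at hI
  calc |greenLeft ω h t| ≤ exp (-ω * t) * (‖h‖ * (exp (ω * t) / ω)) := by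
        rw [greenLeft, abs_mul, abs_of_pos (exp_pos _)]
        gcongr
    _ = ‖h‖ / ω * (exp (-ω * t) * exp (ω * t)) := by ring
    _ = ‖h‖ / ω := by rw [exp_neg_mul_mul_exp_mul, mul_one]

lemma abs_greenRight_le (hω : 0 < ω) (h : ℝ →ᵇ ℝ) (t : ℝ) : |greenRight ω h t| ≤ ‖h‖ / ω := by
  have hneg : -ω < 0 := neg_lt_zero.2 hω
  have hI := abs_setIntegral_bcf_mul_le h (integrableOn_exp_mul_Ioi hneg t) fun s => (exp_pos _).le
  rw [integral_exp_mul_Ioi hneg] at hI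
  calc |greenRight ω h t| ≤ exp (ω * t) * (‖h‖ * (-exp (-ω * t) / -ω)) := by
        rw [greenRight, abs_mul, abs_of_pos (exp_pos _)]
        gcongr
    _ = ‖h‖ / ω * (exp (-ω * t) * exp (ω * t)) := by ring
    _ = ‖h‖ / ω := by rw [exp_neg_mul_mul_exp_mul, mul_one]

lemma greenLeft_sub (hω : 0 < ω) (h₁ h₂ : ℝ →ᵇ ℝ) (t : ℝ) :
    greenLeft ω (h₁ - h₂) t = greenLeft ω h₁ t - greenLeft ω h₂ t := by
  rw [greenLeft, greenLeft, greenLeft,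
    setIntegral_bcf_sub_mul h₁ h₂ (integrableOn_exp_mul_Iic hω t), mul_sub]

lemma greenRight_sub (hω : 0 < ω) (h₁ h₂ : ℝ →ᵇ ℝ) (t : ℝ) :
    greenRight ω (h₁ - h₂) t = greenRight ω h₁ t - greenRight ω h₂ t := by
  rw [greenRight, greenRight, greenRight,
    setIntegral_bcf_sub_mul h₁ h₂ (integrableOn_exp_mul_Ioi (neg_lt_zero.2 hω) t), mul_sub]

lemma hasDerivAt_green (hω : 0 < ω) (h : ℝ →ᵇ ℝ) (t : ℝ) :
    HasDerivAt (green ω h) (greenDeriv ω h t) t := by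
  refine (((hasDerivAt_greenLeft hω h t).add (hasDerivAt_greenRight hω h t)).div_const
    (2 * ω)).congr_deriv ?_
  rw [greenDeriv]
  field_simp
  ring

lemma hasDerivAt_greenDeriv (hω : 0 < ω) (h : ℝ →ᵇ ℝ) (t : ℝ) :
    HasDerivAt (greenDeriv ω h) (ω ^ 2 * green ω h t - h t) t := by
  refine (((hasDerivAt_greenRight hω h t).sub (hasDerivAt_greenLeft hω h t)).div_const
    2).congr_deriv ?_
  rw [green]
  field_simp
  ring

lemma abs_green_le (hω : 0 < ω) (h : ℝ →ᵇ ℝ) (t : ℝ) : |green ω h t| ≤ ‖h‖ / ω ^ 2 := by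
  have hsum := (abs_add_le _ _).trans
    (add_le_add (abs_greenLeft_le hω h t) (abs_greenRight_le hω h t))
  rw [green, abs_div, abs_of_pos (by positivity : 0 < 2 * ω), div_le_iff₀ (by positivity)]
  calc _ ≤ ‖h‖ / ω + ‖h‖ / ω := hsum
    _ = ‖h‖ / ω ^ 2 * (2 * ω) := by field_simp; ring

lemma abs_greenDeriv_le (hω : 0 < ω) (h : ℝ →ᵇ ℝ) (t : ℝ) : |greenDeriv ω h t| ≤ ‖h‖ / ω := by
  have hsum := (abs_sub _ _).trans
    (add_le_add (abs_greenRight_le hω h t) (abs_greenLeft_le hω h t))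
  rw [greenDeriv, abs_div, abs_two, div_le_iff₀ two_pos]
  linarith

lemma green_sub (hω : 0 < ω) (h₁ h₂ : ℝ →ᵇ ℝ) (t : ℝ) :
    green ω (h₁ - h₂) t = green ω h₁ t - green ω h₂ t := by
  simp only [green, greenLeft_sub hω, greenRight_sub hω]
  ring

def greenBCF (hω : 0 < ω) (h : ℝ →ᵇ ℝ) : ℝ →ᵇ ℝ :=
  .ofNormedAddCommGroup (green ω h)
    (continuous_iff_continuousAt.2 fun t => (hasDerivAt_green hω h t).continuousAt)
    (‖h‖ / ω ^ 2) (abs_green_le hω h)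

@[simp]
lemma coe_greenBCF (hω : 0 < ω) (h : ℝ →ᵇ ℝ) : ⇑(greenBCF hω h) = green ω h := rfl

lemma dist_greenBCF_le (hω : 0 < ω) (h₁ h₂ : ℝ →ᵇ ℝ) :
    dist (greenBCF hω h₁) (greenBCF hω h₂) ≤ dist h₁ h₂ / ω ^ 2 := by
  refine (BoundedContinuousFunction.dist_le (by positivity)).2 fun t => ?_
  rw [coe_greenBCF, coe_greenBCF, Real.dist_eq, ← green_sub hω, dist_eq_norm]
  exact abs_green_le hω _ t

lemma eq_green_of_hasDerivAt (hω : 0 < ω) {h : ℝ →ᵇ ℝ} {w w' : ℝ → ℝ}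
    (hw : ∀ t, HasDerivAt w (w' t) t) (hw' : ∀ t, HasDerivAt w' (ω ^ 2 * w t - h t) t)
    (hb : IsBounded (range w)) (hb' : IsBounded (range w')) : w = green ω h := by
  obtain ⟨C, hC⟩ := isBounded_iff_forall_norm_le.1 hb
  obtain ⟨C', hC'⟩ := isBounded_iff_forall_norm_le.1 hb'
  funext t
  refine sub_eq_zero.1 <| eq_zero_of_hasDerivAt_of_hasDerivAt_sq_mul
    (z := fun t => w t - green ω h t) (z' := fun t => w' t - greenDeriv ω h t) hω
    (fun t => (hw t).sub (hasDerivAt_green hω h t))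
    (fun t => ((hw' t).sub (hasDerivAt_greenDeriv hω h t)).congr_deriv (by ring))
    (fun t => (abs_sub _ _).trans (add_le_add (hC _ (mem_range_self t)) (abs_green_le hω h t)))
    (fun t => (abs_sub _ _).trans
      (add_le_add (hC' _ (mem_range_self t)) (abs_greenDeriv_le hω h t))) t

def IsBoundedSolution (g f u : ℝ → ℝ) : Prop :=
  ContDiff ℝ 2 u ∧ (∀ t, -deriv (deriv u) t + g (u t) = f t) ∧
    IsBounded (range u) ∧ IsBounded (range (deriv u))

lemma IsBoundedSolution.comp_add_const {g f u : ℝ → ℝ} {c : ℝ} (hu : IsBoundedSolution g f u)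
    (hf : Periodic f c) : IsBoundedSolution g f (fun t => u (t + c)) := by
  obtain ⟨hu2, heq, hb, hb'⟩ := hu
  have hderiv {v : ℝ → ℝ} : deriv (fun t => v (t + c)) = fun t => deriv v (t + c) :=
    funext fun t => deriv_comp_add_const v c t
  refine ⟨hu2.comp (contDiff_id.add contDiff_const), fun t => ?_, ?_, ?_⟩
  · rw [hderiv, hderiv, heq, hf]
  · exact hb.subset (range_comp_subset_range _ u)
  · exact hderiv ▸ hb'.subset (range_comp_subset_range _ (deriv u))

lemma isBoundedSolution_of_periodic {g f u : ℝ → ℝ} {c : ℝ} (hc : c ≠ 0) (hu : ContDiff ℝ 2 u)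
    (heq : ∀ t, -deriv (deriv u) t + g (u t) = f t) (hper : Periodic u c) :
    IsBoundedSolution g f u :=
  ⟨hu, heq, hper.isBounded_of_continuous hc hu.continuous,
    hper.deriv.isBounded_of_continuous hc (hu.continuous_deriv one_le_two)⟩

section FixedPoint

variable {L : ℝ≥0} {g : ℝ → ℝ}

def solutionMap (hω : 0 < ω) (hg : LipschitzWith L (fun x => ω ^ 2 * x - g x)) (f : ℝ →ᵇ ℝ)
    (u : ℝ →ᵇ ℝ) : ℝ →ᵇ ℝ :=
  greenBCF hω (f + u.comp (fun x => ω ^ 2 * x - g x) hg)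

variable (hω : 0 < ω) (hg : LipschitzWith L (fun x => ω ^ 2 * x - g x)) (f : ℝ →ᵇ ℝ)

lemma isFixedPt_solutionMap_iff (u : ℝ →ᵇ ℝ) :
    IsFixedPt (solutionMap hω hg f) u ↔ IsBoundedSolution g f u := by
  set h := f + u.comp _ hg
  have hh : ∀ t, h t = f t + (ω ^ 2 * u t - g (u t)) := fun t => rfl
  constructor
  · intro hfix
    have hu : ⇑u = green ω h := congrArg (⇑) hfix.symm
    have hd : ∀ t, HasDerivAt u (greenDeriv ω h t) t := hu ▸ hasDerivAt_green hω h
    have hd' : ∀ t, HasDerivAt (greenDeriv ω h) (ω ^ 2 * u t - h t) t :=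
      hu ▸ hasDerivAt_greenDeriv hω h
    have hderiv : deriv u = greenDeriv ω h := funext fun t => (hd t).deriv
    refine ⟨contDiff_two_of_hasDerivAt hd hd' (by fun_prop), fun t => ?_, u.isBounded_range, ?_⟩
    · rw [hderiv, (hd' t).deriv, hh]
      ring
    · refine isBounded_iff_forall_norm_le.2 ⟨‖h‖ / ω, forall_mem_range.2 fun t => ?_⟩
      exact hderiv ▸ abs_greenDeriv_le hω h t
  · rintro ⟨hu2, heq, hb, hb'⟩
    have hd' : ∀ t, HasDerivAt (deriv u) (ω ^ 2 * u t - h t) t := fun t => by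
      rw [hh, show ω ^ 2 * u t - (f t + (ω ^ 2 * u t - g (u t))) = deriv (deriv u) t by
        linarith [heq t]]
      exact (hu2.differentiable_deriv_two t).hasDerivAt
    have hd : ∀ t, HasDerivAt u (deriv u t) t := fun t =>
      (hu2.differentiable two_ne_zero t).hasDerivAt
    exact DFunLike.ext' (eq_green_of_hasDerivAt hω hd hd' hb hb').symm

lemma contractingWith_solutionMap (hL : (L : ℝ) < ω ^ 2) :
    ContractingWith (L / (ω ^ 2).toNNReal) (solutionMap hω hg f) := by
  have hK : ((L / (ω ^ 2).toNNReal : ℝ≥0) : ℝ) = L / ω ^ 2 := by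
    rw [NNReal.coe_div, Real.coe_toNNReal _ (by positivity)]
  refine ⟨by rw [← NNReal.coe_lt_coe, hK]; exact (div_lt_one (by positivity)).2 hL,
    LipschitzWith.of_dist_le_mul fun u v => ?_⟩
  rw [hK]
  calc dist (solutionMap hω hg f u) (solutionMap hω hg f v)
      ≤ dist (u.comp _ hg) (v.comp _ hg) / ω ^ 2 := by
        refine (dist_greenBCF_le hω _ _).trans_eq ?_
        rw [dist_add_left]
    _ ≤ L * dist u v / ω ^ 2 := by
        gcongr
        exact (BoundedContinuousFunction.lipschitz_comp hg).dist_le_mul u v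
    _ = L / ω ^ 2 * dist u v := by ring

end FixedPoint

theorem existsUnique_isBoundedSolution {L : ℝ≥0} {g : ℝ → ℝ} (hω : 0 < ω)
    (hg : LipschitzWith L (fun x => ω ^ 2 * x - g x)) (f : ℝ →ᵇ ℝ) (hL : (L : ℝ) < ω ^ 2) :
    ∃! u : ℝ → ℝ, IsBoundedSolution g f u := by
  have hT := contractingWith_solutionMap hω hg f hL
  refine ⟨_, (isFixedPt_solutionMap_iff hω hg f _).1 hT.fixedPoint_isFixedPt, fun v hv => ?_⟩
  let V : ℝ →ᵇ ℝ := ⟨⟨v, hv.1.continuous⟩, Metric.isBounded_range_iff.1 hv.2.2.1⟩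
  exact congrArg (⇑) (hT.fixedPoint_unique ((isFixedPt_solutionMap_iff hω hg f V).2 hv))

end

end SymmetryPreservation

open SymmetryPreservation

/-- Preservation of symmetry with uniqueness: if `g'` is squeezed strictly between
consecutive eigenvalues `i²` and `(i+1)²`, and `f` is continuous and `2π/s`-periodic,
then the problem `-u'' + g(u) = f` has exactly one `C²` `2π`-periodic solution, and
this unique solution is `2π/s`-periodic. -/
theorem preservation_of_symmetry_unique
    (g : ℝ → ℝ) (hg : ContDiff ℝ 1 g)
    (i : ℕ) (hi : 1 ≤ i)
    (hlow : ∀ x : ℝ, (i : ℝ) ^ 2 < deriv g x)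
    (hhigh : ∀ x : ℝ, deriv g x < ((i : ℝ) + 1) ^ 2)
    (s : ℕ) (hs : 0 < s)
    (f : ℝ → ℝ) (hf : Continuous f)
    (hfper : Function.Periodic f (2 * π / s)) :
    (∃! u : ℝ → ℝ, ContDiff ℝ 2 u ∧ Function.Periodic u (2 * π) ∧
        ∀ t : ℝ, -(deriv (deriv u) t) + g (u t) = f t) ∧
    (∀ u : ℝ → ℝ, ContDiff ℝ 2 u → Function.Periodic u (2 * π) →
        (∀ t : ℝ, -(deriv (deriv u) t) + g (u t) = f t) →
        Function.Periodic u (2 * π / s)) := by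
  have hc : 2 * π / s ≠ 0 := by positivity
  have hlip := lipschitzWith_mul_sub_of_deriv_mem_Icc (hg.differentiable one_ne_zero)
    fun x => ⟨(hlow x).le, (hhigh x).le⟩
  have hL : ((((i : ℝ) + 1) ^ 2 - (i : ℝ) ^ 2).toNNReal : ℝ) < ((i : ℝ) + 1) ^ 2 := by
    have : (1 : ℝ) ≤ i := by exact_mod_cast hi
    rw [Real.coe_toNNReal _ (by nlinarith)]
    nlinarith
  let F : ℝ →ᵇ ℝ := ⟨⟨f, hf⟩, Metric.isBounded_range_iff.1 (hfper.isBounded_of_continuous hc hf)⟩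
  obtain ⟨u, hu, huniq⟩ := existsUnique_isBoundedSolution (by positivity) hlip F hL
  have hper : Function.Periodic u (2 * π / s) := fun t =>
    congrFun (huniq _ (hu.comp_add_const hfper)) t
  have hper2π : Function.Periodic u (2 * π) := by
    simpa [mul_div_cancel₀ _ (Nat.cast_ne_zero.2 hs.ne' : (s : ℝ) ≠ 0)] using hper.nat_mul s
  have heq_u : ∀ v, ContDiff ℝ 2 v → Function.Periodic v (2 * π) →
      (∀ t, -(deriv (deriv v) t) + g (v t) = f t) → v = u := fun v hv hvper hveq =>
    huniq v (isBoundedSolution_of_periodic (by positivity) hv hveq hvper)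
  exact ⟨⟨u, ⟨hu.1, hper2π, hu.2.1⟩, fun v hv => heq_u v hv.1 hv.2.1 hv.2.2⟩,
    fun v hv hvper hveq => heq_u v hv hvper hveq ▸ hper⟩
end

section
/- Let H be a real Hilbert space, let L : H → H be a bounded self-adjoint linear operator, and let λ < μ be real numbers such that λ and μ belong to the spectrum of L while the open interval (λ, μ) is contained in the resolvent set of L (i.e. (λ, μ) ∩ σ(L) = ∅). Let N : H → H be a map that is differentiable at every point, with derivative N'(x) a bounded self-adjoint operator for each x ∈ H, and suppose there are real numbers p, q with λ < q ≤ p < μ such that q‖h‖² ≤ ⟨N'(x)h, h⟩ ≤ p‖h‖² for all x, h ∈ H. Then L − N is a bijection of H onto H, and its inverse (L − N)⁻¹ : H → H is Lipschitz continuous. -/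
open scoped InnerProductSpace NNReal
open Set Function

/-! With `c = (p + q) / 2` write `L - N = (L - c) - (N - c)`. The bounds `q ≤ N' x ≤ p` on the
self-adjoint derivatives give `‖N' x - c‖ ≤ k := (p - q) / 2`, so `L - N` approximates the linear
map `L - c` up to a `k`-Lipschitz error. The spectral gap makes `L - c` invertible, and since the
norm of a self-adjoint operator is its spectral radius, `‖(L - c)⁻¹‖ ≤ 1 / d` with
`d = min (c - λ) (μ - c) > k`. A map that approximates an invertible linear map this well is a
bijection with Lipschitz inverse, by the contraction argument behind the inverse function
theorem. -/

namespace ContinuousLinearMap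

variable {𝕜 E : Type*} [RCLike 𝕜] [NormedAddCommGroup E] [InnerProductSpace 𝕜 E]

theorem norm_le_of_abs_re_inner_le {T : E →L[𝕜] E} (hT : (T : E →ₗ[𝕜] E).IsSymmetric) {k : ℝ}
    (hk : 0 ≤ k) (hTk : ∀ x, |RCLike.re ⟪T x, x⟫_𝕜| ≤ k * ‖x‖ ^ 2) : ‖T‖ ≤ k := by
  rw [T.norm_eq_iSup_rayleighQuotient hT]
  refine ciSup_le fun x => ?_
  rcases eq_or_ne x 0 with rfl | hx
  · simpa using hk
  rw [rayleighQuotient, reApplyInnerSelf_apply, abs_div, abs_sq, div_le_iff₀ (by positivity)]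
  exact hTk x

theorem norm_inv_le_of_le_norm_mem_spectrum [CompleteSpace E] (u : (E →L[𝕜] E)ˣ)
    (hu : IsSelfAdjoint (u : E →L[𝕜] E)) {d : ℝ} (hd : 0 < d)
    (hgap : ∀ t ∈ spectrum 𝕜 (u : E →L[𝕜] E), d ≤ ‖t‖) : ‖(↑u⁻¹ : E →L[𝕜] E)‖ ≤ d⁻¹ := by
  have hinv : IsSelfAdjoint (↑u⁻¹ : E →L[𝕜] E) := by
    rw [IsSelfAdjoint, ← Units.coe_star, (IsSelfAdjoint.inv (Units.ext hu.star_eq)).star_eq]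
  suffices spectralRadius 𝕜 (↑u⁻¹ : E →L[𝕜] E) ≤ ENNReal.ofReal d⁻¹ by
    rwa [spectralRadius_eq_nnnorm _ hinv, ← enorm_eq_nnnorm, ← ofReal_norm,
      ENNReal.ofReal_le_ofReal_iff (by positivity)] at this
  refine iSup₂_le fun s hs => ?_
  have hs0 : s ≠ 0 := by rintro rfl; exact spectrum.zero_notMem 𝕜 u⁻¹.isUnit hs
  have hsu : s⁻¹ ∈ spectrum 𝕜 (u : E →L[𝕜] E) :=
    spectrum.inv_mem_iff (r := Units.mk0 s⁻¹ (inv_ne_zero hs0)).mpr (by simpa using hs)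
  have hle := hgap _ hsu
  rw [norm_inv, le_inv_comm₀ hd (norm_pos_iff.mpr hs0)] at hle
  rw [← enorm_eq_nnnorm, ← ofReal_norm]
  exact ENNReal.ofReal_le_ofReal hle

end ContinuousLinearMap

theorem ContinuousLinearMap.norm_algebraMap_midpoint_sub_le {E : Type*} [NormedAddCommGroup E]
    [InnerProductSpace ℝ E] {T : E →L[ℝ] E} (hT : (T : E →ₗ[ℝ] E).IsSymmetric) {q p : ℝ}
    (hqp : q ≤ p) (hq : ∀ x, q * ‖x‖ ^ 2 ≤ ⟪T x, x⟫_ℝ) (hp : ∀ x, ⟪T x, x⟫_ℝ ≤ p * ‖x‖ ^ 2) :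
    ‖algebraMap ℝ (E →L[ℝ] E) ((p + q) / 2) - T‖ ≤ (p - q) / 2 := by
  have hc : ((algebraMap ℝ (E →L[ℝ] E) ((p + q) / 2) : E →L[ℝ] E) : E →ₗ[ℝ] E).IsSymmetric :=
    fun x y => by simp [real_inner_smul_left, real_inner_smul_right]
  refine norm_le_of_abs_re_inner_le (by simpa using hc.sub hT) (by linarith) fun x => ?_
  simp only [RCLike.re_to_real, sub_apply, inner_sub_left, Algebra.algebraMap_eq_smul_one,
    smul_apply, one_apply_eq_self, real_inner_smul_left, real_inner_self_eq_norm_sq, abs_le]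
  constructor <;> linarith [hq x, hp x]

theorem approximatesLinearOn_sub_of_inner_bounds {E : Type*} [NormedAddCommGroup E]
    [InnerProductSpace ℝ E] (L : E →L[ℝ] E) {N : E → E} {N' : E → E →L[ℝ] E}
    (hN : ∀ x, HasFDerivAt N (N' x) x) (hN' : ∀ x, (N' x : E →ₗ[ℝ] E).IsSymmetric) {q p : ℝ}
    (hqp : q ≤ p) (hq : ∀ x h, q * ‖h‖ ^ 2 ≤ ⟪N' x h, h⟫_ℝ)
    (hp : ∀ x h, ⟪N' x h, h⟫_ℝ ≤ p * ‖h‖ ^ 2) :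
    ApproximatesLinearOn (fun x => L x - N x) (L - algebraMap ℝ (E →L[ℝ] E) ((p + q) / 2)) univ
      (Real.toNNReal ((p - q) / 2)) := by
  intro x _ y _
  have hbound (z : E) : ‖(L - N' z) - (L - algebraMap ℝ (E →L[ℝ] E) ((p + q) / 2))‖ ≤
      Real.toNNReal ((p - q) / 2) := by
    rw [sub_sub_sub_cancel_left, Real.coe_toNNReal _ (by linarith)]
    exact ContinuousLinearMap.norm_algebraMap_midpoint_sub_le (hN' z) hqp (hq z) (hp z)
  exact convex_univ.norm_image_sub_le_of_norm_hasFDerivWithin_le'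
    (fun z _ => (L.hasFDerivAt.sub (hN z)).hasFDerivWithinAt) (fun z _ => hbound z)
    (mem_univ y) (mem_univ x)

theorem ApproximatesLinearOn.bijective_and_exists_lipschitzWith_invFun {𝕜 E F : Type*}
    [NontriviallyNormedField 𝕜] [NormedAddCommGroup E] [NormedSpace 𝕜 E] [NormedAddCommGroup F]
    [NormedSpace 𝕜 F] [CompleteSpace E] {f : E → F} {f' : E ≃L[𝕜] F} {c : ℝ≥0} {d : ℝ}
    (hf : ApproximatesLinearOn f (f' : E →L[𝕜] F) univ c)
    (hd : ‖(f'.symm : F →L[𝕜] E)‖ ≤ d⁻¹) (hcd : c < d) :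
    Bijective f ∧ ∃ K : ℝ≥0, LipschitzWith K (invFun f) := by
  have hc : Subsingleton E ∨ c < ‖(f'.symm : F →L[𝕜] E)‖₊⁻¹ := by
    rcases subsingleton_or_nontrivial E with hE | hE
    · exact .inl hE
    have : Nontrivial F := f'.toEquiv.symm.nontrivial
    right
    rw [← NNReal.coe_lt_coe, NNReal.coe_inv, coe_nnnorm]
    exact hcd.trans_le ((le_inv_comm₀ f'.symm.norm_pos (c.2.trans_lt hcd)).mp hd)
  have hanti : AntilipschitzWith (‖(f'.symm : F →L[𝕜] E)‖₊⁻¹ - c)⁻¹ f :=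
    .of_le_mul_dist fun x y => (hf.antilipschitz hc).le_mul_dist ⟨x, trivial⟩ ⟨y, trivial⟩
  have hsurj := hf.surjective hc
  exact ⟨⟨hanti.injective, hsurj⟩, _, hanti.to_rightInverse (rightInverse_invFun hsurj)⟩

theorem spectrum.min_sub_le_abs_of_mem_sub_algebraMap {A : Type*} [Ring A] [Algebra ℝ A] {a : A}
    {lam mu : ℝ} (hgap : ∀ x ∈ Ioo lam mu, x ∉ spectrum ℝ a) {c t : ℝ}
    (ht : t ∈ spectrum ℝ (a - algebraMap ℝ A c)) : min (c - lam) (mu - c) ≤ |t| := by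
  rw [← spectrum.sub_singleton_eq] at ht
  obtain ⟨s, hs, _, rfl, rfl⟩ := ht
  rcases not_and_or.mp (mt (hgap s) (not_not.mpr hs)) with h | h
  · exact (min_le_left _ _).trans (neg_le_abs _ |>.trans' (by linarith [not_lt.mp h]))
  · exact (min_le_right _ _).trans (le_abs_self _ |>.trans' (by linarith [not_lt.mp h]))

theorem mawhin_surjectivity_general
    {H : Type*} [NormedAddCommGroup H] [InnerProductSpace ℝ H] [CompleteSpace H]
    (L : H →L[ℝ] H) (hL : IsSelfAdjoint L)
    (lam mu : ℝ)
    (hres : ∀ x ∈ Set.Ioo lam mu, x ∉ spectrum ℝ L)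
    (N : H → H) (N' : H → H →L[ℝ] H)
    (hN : ∀ x : H, HasFDerivAt N (N' x) x)
    (hN'sa : ∀ x : H, IsSelfAdjoint (N' x))
    (q p : ℝ) (hlq : lam < q) (hqp : q ≤ p) (hpm : p < mu)
    (hlower : ∀ x h : H, q * ‖h‖ ^ 2 ≤ ⟪N' x h, h⟫_ℝ)
    (hupper : ∀ x h : H, ⟪N' x h, h⟫_ℝ ≤ p * ‖h‖ ^ 2) :
    Function.Bijective (fun x : H => L x - N x) ∧
      ∃ K : ℝ≥0, LipschitzWith K (Function.invFun (fun x : H => L x - N x)) := by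
  set c := (p + q) / 2 with hc
  set d := min (c - lam) (mu - c)
  have hk : (Real.toNNReal ((p - q) / 2) : ℝ) = (p - q) / 2 := Real.coe_toNNReal _ (by linarith)
  have hkd : (Real.toNNReal ((p - q) / 2) : ℝ) < d :=
    lt_min (by rw [hk, hc]; linarith) (by rw [hk, hc]; linarith)
  have hunit : IsUnit (L - algebraMap ℝ (H →L[ℝ] H) c) := by
    refine (spectrum.zero_notMem_iff ℝ).mp fun h0 => ?_
    have := spectrum.min_sub_le_abs_of_mem_sub_algebraMap hres h0
    rw [abs_zero] at this
    linarith
  have hinv : ‖(↑hunit.unit⁻¹ : H →L[ℝ] H)‖ ≤ d⁻¹ :=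
    ContinuousLinearMap.norm_inv_le_of_le_norm_mem_spectrum hunit.unit
      (hL.sub (.algebraMap _ (.all c))) (by linarith)
      fun t ht => spectrum.min_sub_le_abs_of_mem_sub_algebraMap hres ht
  exact ApproximatesLinearOn.bijective_and_exists_lipschitzWith_invFun
    (f' := ContinuousLinearEquiv.unitsEquiv ℝ H hunit.unit)
    (approximatesLinearOn_sub_of_inner_bounds L hN (fun x => (hN'sa x).isSymmetric) hqp hlower
      hupper) hinv hkd

/-- Mawhin's abstract theorem (bounded everywhere-defined case): if `L` is a bounded
self-adjoint operator on a real Hilbert space with `λ, μ ∈ σ(L)` and `(λ, μ) ⊆ ρ(L)`,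
and `N` is everywhere differentiable with self-adjoint derivatives satisfying
`qI ≤ N'(x) ≤ pI` for some `λ < q ≤ p < μ`, then `L - N` is bijective with a
Lipschitz inverse. -/
theorem mawhin_surjectivity
    {H : Type*} [NormedAddCommGroup H] [InnerProductSpace ℝ H] [CompleteSpace H]
    (L : H →L[ℝ] H) (hL : IsSelfAdjoint L)
    (lam mu : ℝ) (hlm : lam < mu)
    (hlam : lam ∈ spectrum ℝ L) (hmu : mu ∈ spectrum ℝ L)
    (hres : ∀ x ∈ Set.Ioo lam mu, x ∉ spectrum ℝ L)
    (N : H → H) (N' : H → H →L[ℝ] H)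
    (hN : ∀ x : H, HasFDerivAt N (N' x) x)
    (hN'sa : ∀ x : H, IsSelfAdjoint (N' x))
    (q p : ℝ) (hlq : lam < q) (hqp : q ≤ p) (hpm : p < mu)
    (hlower : ∀ x h : H, q * ‖h‖ ^ 2 ≤ ⟪N' x h, h⟫_ℝ)
    (hupper : ∀ x h : H, ⟪N' x h, h⟫_ℝ ≤ p * ‖h‖ ^ 2) :
    Function.Bijective (fun x : H => L x - N x) ∧
      ∃ K : ℝ≥0, LipschitzWith K (Function.invFun (fun x : H => L x - N x)) :=
  mawhin_surjectivity_general L hL lam mu hres N N' hN hN'sa q p hlq hqp hpm hlower hupper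
end
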